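/- arXiv:2405.07262 — 2 statements merged into one kernel-verified Lean document; each statement's English description precedes it below -/
import Mathlib

section
/- Let M > 0, Ψ > 0, δ ∈ (0, M/2], and set ε₁ := (Ψ + 1/δ)^{-1}. Let ξ : [0, ω) → ℝ be continuously differentiable with -M < ξ(t) < 0 for all t, -M + δ ≤ ξ(0) ≤ -δ, and ξ'(t) = w(t) + 1/ξ(t) + 1/(M + ξ(t)) where |w(t)| ≤ Ψ for all t. Then -M + ε₁ ≤ ξ(t) ≤ -ε₁ for all t ∈ [0, ω). -/
/-!
At the level `ξ = -ε₁` the term `1/ξ = -(Ψ + 1/δ)` outweighs both `w ≤ Ψ` and `1/(M + ξ) < 1/δ`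
(because `ε₁ < δ ≤ M/2`), so `ξ` is strictly decreasing whenever it touches `-ε₁` and can never
cross that level from below. The reflection `ξ ↦ -M - ξ`, `w ↦ -w` preserves the equation and
exchanges the two barriers, which gives the lower bound.
-/

open Set

theorem drift_neg_at_upper_barrier {M Ψ δ w : ℝ} (hΨ : 0 < Ψ) (hδ : δ ∈ Ioc 0 (M / 2))
    (hw : w ≤ Ψ) : w + 1 / -(Ψ + 1 / δ)⁻¹ + 1 / (M + -(Ψ + 1 / δ)⁻¹) < 0 := by
  obtain ⟨hδ0, hδM⟩ := hδ
  have hε_lt : (Ψ + 1 / δ)⁻¹ < δ := by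
    rw [inv_lt_comm₀ (by positivity) hδ0, ← one_div]
    linarith
  have hinv : 1 / -(Ψ + 1 / δ)⁻¹ = -(Ψ + 1 / δ) := by
    rw [one_div, inv_neg, inv_inv]
  have hgap : 1 / (M + -(Ψ + 1 / δ)⁻¹) < 1 / δ :=
    one_div_lt_one_div_of_lt hδ0 (by linarith)
  linarith

theorem le_neg_inv_of_hasDerivAt_spacing {M Ψ δ a b : ℝ} {ξ w : ℝ → ℝ} (hΨ : 0 < Ψ)
    (hδ : δ ∈ Ioc 0 (M / 2)) (hab : a ≤ b)
    (hode : ∀ t ∈ Icc a b, HasDerivAt ξ (w t + 1 / ξ t + 1 / (M + ξ t)) t)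
    (hw : ∀ t ∈ Icc a b, w t ≤ Ψ) (hinit : ξ a ≤ -δ) :
    ξ b ≤ -(Ψ + 1 / δ)⁻¹ := by
  have hε_le : (Ψ + 1 / δ)⁻¹ ≤ δ := by
    rw [inv_le_comm₀ (by positivity [hδ.1]) hδ.1, ← one_div]
    linarith
  refine image_le_of_deriv_right_lt_deriv_boundary
    (fun t ht => (hode t ht).continuousAt.continuousWithinAt)
    (fun t ht => (hode t (Ico_subset_Icc_self ht)).hasDerivWithinAt)
    (B := fun _ => -(Ψ + 1 / δ)⁻¹) (by linarith) (fun _ => hasDerivAt_const _ _)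
    (fun t ht hξt => ?_) ⟨hab, le_rfl⟩
  rw [hξt]
  exact drift_neg_at_upper_barrier hΨ hδ (hw t (Ico_subset_Icc_self ht))

theorem reflect_spacing_drift (M w x : ℝ) :
    -w + 1 / (-M - x) + 1 / (M + (-M - x)) = -(w + 1 / x + 1 / (M + x)) := by
  rw [show -M - x = -(M + x) by ring, show M + -(M + x) = -x by ring,
    one_div_neg_eq_neg_one_div, one_div_neg_eq_neg_one_div]
  ring

theorem spacing_invariance_general
    (M Ψ δ : ℝ) (hΨ : 0 < Ψ) (hδ : δ ∈ Set.Ioc 0 (M / 2))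
    (ε₁ : ℝ) (hε₁ : ε₁ = (Ψ + 1 / δ)⁻¹)
    (ω : EReal)
    (ξ w : ℝ → ℝ)
    (hode : ∀ t : ℝ, 0 ≤ t → (t : EReal) < ω →
      HasDerivAt ξ (w t + 1 / ξ t + 1 / (M + ξ t)) t)
    (hwbd : ∀ t : ℝ, 0 ≤ t → (t : EReal) < ω → |w t| ≤ Ψ)
    (hinit : -M + δ ≤ ξ 0 ∧ ξ 0 ≤ -δ) :
    ∀ t : ℝ, 0 ≤ t → (t : EReal) < ω → -M + ε₁ ≤ ξ t ∧ ξ t ≤ -ε₁ := by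
  intro t ht htω
  subst hε₁
  have hdom : ∀ u ∈ Icc 0 t, 0 ≤ u ∧ (u : EReal) < ω := fun u hu =>
    ⟨hu.1, lt_of_le_of_lt (EReal.coe_le_coe_iff.mpr hu.2) htω⟩
  have hupper := le_neg_inv_of_hasDerivAt_spacing hΨ hδ ht
    (fun u hu => hode u (hdom u hu).1 (hdom u hu).2)
    (fun u hu => (abs_le.mp (hwbd u (hdom u hu).1 (hdom u hu).2)).2) hinit.2
  have hlower := le_neg_inv_of_hasDerivAt_spacing (ξ := fun u => -M - ξ u) (w := fun u => -w u)
    hΨ hδ ht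
    (fun u hu => by
      rw [reflect_spacing_drift]
      exact (hode u (hdom u hu).1 (hdom u hu).2).const_sub (-M))
    (fun u hu => neg_le.mp (abs_le.mp (hwbd u (hdom u hu).1 (hdom u hu).2)).1)
    (by linarith [hinit.1])
  constructor <;> linarith

theorem spacing_invariance
    (M Ψ δ : ℝ) (hM : 0 < M) (hΨ : 0 < Ψ) (hδ : δ ∈ Set.Ioc 0 (M / 2))
    (ε₁ : ℝ) (hε₁ : ε₁ = (Ψ + 1 / δ)⁻¹)
    (ω : EReal) (hω : 0 < ω)
    (ξ w : ℝ → ℝ)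
    (hrange : ∀ t : ℝ, 0 ≤ t → (t : EReal) < ω → -M < ξ t ∧ ξ t < 0)
    (hode : ∀ t : ℝ, 0 ≤ t → (t : EReal) < ω →
      HasDerivAt ξ (w t + 1 / ξ t + 1 / (M + ξ t)) t)
    (hwbd : ∀ t : ℝ, 0 ≤ t → (t : EReal) < ω → |w t| ≤ Ψ)
    (hinit : -M + δ ≤ ξ 0 ∧ ξ 0 ≤ -δ) :
    ∀ t : ℝ, 0 ≤ t → (t : EReal) < ω → -M + ε₁ ≤ ξ t ∧ ξ t ≤ -ε₁ :=
  spacing_invariance_general M Ψ δ hΨ hδ ε₁ hε₁ ω ξ w hode hwbd hinit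
end

section
/- Let p, q ∈ (0,1) with (1+p)q < 1 and constants c₁, c₂ > 0, c₃, c₄ ≥ 0. Then there exists K > 0 such that for all k₂ ≥ K, the sequence defined by z_{N₀} = z₀ > 0 arbitrary fixed (with z₀ ≤ ẑ) and z_i = ((1+p)q + c₁/k₂) z_{i-1} + (c₂/k₂²) z_{i-1}² + k₂ c₃ + c₄ for i > N₀ is bounded above by ẑ := k₂²(1-α)/(2c₂) + √(k₂⁴(1-α)²/(4c₂²) - (k₂²/c₂)(k₂c₃+c₄)), where α = (1+p)q + c₁/k₂; in particular (z_i) is bounded uniformly in i. -/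
/-!
The recursion is `z ↦ α z + β z² + γ` with `α, β, γ ≥ 0`, a map that is monotone on `[0, ∞)`.
Its larger fixed point `ẑ` is therefore the top of an invariant interval `[0, ẑ]`, so every orbit
starting in `(0, ẑ]` stays below `ẑ`. The fixed point is real as soon as the discriminant
`(1 - α)² - 4 β γ` is nonnegative; with `β = c₂ / k₂²` and `γ = k₂ c₃ + c₄` we have `4 β γ → 0`
while `(1 - α)² → (1 - (1 + p) q)² > 0` as `k₂ → ∞`, which fixes the threshold `K`.
-/

open Filter Set Topology

theorem Set.MapsTo.mem_of_eq_apply_pred {α : Type*} {f : α → α} {s : Set α} (hf : MapsTo f s s)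
    {z : ℕ → α} {N₀ : ℕ} (h₀ : z N₀ ∈ s) (hz : ∀ i, N₀ < i → z i = f (z (i - 1))) :
    ∀ i, N₀ ≤ i → z i ∈ s := by
  intro i hi
  induction i, hi using Nat.le_induction with
  | base => exact h₀
  | succ n _ ih => simpa [hz (n + 1) (by omega)] using hf ih

theorem mapsTo_Icc_zero_of_fixedPt {a b c Z : ℝ} (ha : 0 ≤ a) (hb : 0 ≤ b) (hc : 0 ≤ c)
    (hZ : a * Z + b * Z ^ 2 + c = Z) :
    MapsTo (fun z ↦ a * z + b * z ^ 2 + c) (Icc 0 Z) (Icc 0 Z) := by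
  rintro z ⟨hz₀, hzZ⟩
  refine ⟨by positivity, ?_⟩
  calc a * z + b * z ^ 2 + c ≤ a * Z + b * Z ^ 2 + c := by gcongr
    _ = Z := hZ

/-- The larger root of `a z + b z² + c = z`. -/
noncomputable def upperFixedPoint (a b c : ℝ) : ℝ :=
  (1 - a) / (2 * b) + √((1 - a) ^ 2 / (4 * b ^ 2) - c / b)

theorem upperFixedPoint_isFixedPt {a b c : ℝ} (hb : 0 < b) (hdisc : 4 * b * c ≤ (1 - a) ^ 2) :
    a * upperFixedPoint a b c + b * upperFixedPoint a b c ^ 2 + c = upperFixedPoint a b c := by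
  have hD : 0 ≤ (1 - a) ^ 2 / (4 * b ^ 2) - c / b := by
    rw [sub_nonneg, div_le_div_iff₀ hb (by positivity)]
    nlinarith
  obtain ⟨s, hs_def, hs⟩ : ∃ s, √((1 - a) ^ 2 / (4 * b ^ 2) - c / b) = s ∧
      s ^ 2 = (1 - a) ^ 2 / (4 * b ^ 2) - c / b := ⟨_, rfl, Real.sq_sqrt hD⟩
  rw [upperFixedPoint, hs_def]
  field_simp at hs ⊢
  linear_combination hs

theorem upperFixedPoint_div_sq (a c₂ c k : ℝ) :
    upperFixedPoint a (c₂ / k ^ 2) c =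
      k ^ 2 * (1 - a) / (2 * c₂) + √(k ^ 4 * (1 - a) ^ 2 / (4 * c₂ ^ 2) - (k ^ 2 / c₂) * c) := by
  simp only [upperFixedPoint, div_eq_mul_inv, mul_inv, inv_inv, mul_pow, inv_pow, ← pow_mul]
  ring_nf

theorem eventually_four_mul_le_one_sub_sq {r : ℝ} (hr : r < 1) (c₁ c₂ c₃ c₄ : ℝ) :
    ∀ᶠ k in atTop, 4 * (c₂ / k ^ 2) * (k * c₃ + c₄) ≤ (1 - (r + c₁ / k)) ^ 2 := by
  have hinv : Tendsto (fun k : ℝ ↦ k⁻¹) atTop (𝓝 0) := tendsto_inv_atTop_zero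
  have hlhs : Tendsto (fun k : ℝ ↦ 4 * (c₂ / k ^ 2) * (k * c₃ + c₄)) atTop (𝓝 0) := by
    have hlim : Tendsto (fun k : ℝ ↦ 4 * c₂ * (c₃ * k⁻¹ + c₄ * k⁻¹ ^ 2)) atTop (𝓝 0) := by
      simpa using ((hinv.const_mul c₃).add ((hinv.pow 2).const_mul c₄)).const_mul (4 * c₂)
    refine hlim.congr' ?_
    filter_upwards [eventually_ne_atTop 0] with k hk
    field_simp
  have hrhs : Tendsto (fun k : ℝ ↦ (1 - (r + c₁ / k)) ^ 2) atTop (𝓝 ((1 - r) ^ 2)) := by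
    simpa [div_eq_mul_inv] using ((tendsto_const_nhds.add (hinv.const_mul c₁)).const_sub 1).pow 2
  exact (hlhs.eventually_lt hrhs (by nlinarith)).mono fun _ ↦ le_of_lt

theorem quadratic_recursion_bounded
    (p q c₁ c₂ c₃ c₄ : ℝ)
    (hp : p ∈ Set.Ioo (0:ℝ) 1) (hq : q ∈ Set.Ioo (0:ℝ) 1) (hpq : (1 + p) * q < 1)
    (hc₁ : 0 < c₁) (hc₂ : 0 < c₂) (hc₃ : 0 ≤ c₃) (hc₄ : 0 ≤ c₄) (N₀ : ℕ) :
    ∃ K > 0, ∀ k₂ ≥ K,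
      ∀ z : ℕ → ℝ,
        0 < z N₀ →
        z N₀ ≤ (k₂ ^ 2 * (1 - ((1 + p) * q + c₁ / k₂)) / (2 * c₂) +
          Real.sqrt (k₂ ^ 4 * (1 - ((1 + p) * q + c₁ / k₂)) ^ 2 / (4 * c₂ ^ 2) -
            (k₂ ^ 2 / c₂) * (k₂ * c₃ + c₄))) →
        (∀ i : ℕ, N₀ < i →
          z i = ((1 + p) * q + c₁ / k₂) * z (i - 1) + (c₂ / k₂ ^ 2) * z (i - 1) ^ 2 +
            k₂ * c₃ + c₄) →
        ∀ i : ℕ, N₀ ≤ i →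
          z i ≤ k₂ ^ 2 * (1 - ((1 + p) * q + c₁ / k₂)) / (2 * c₂) +
            Real.sqrt (k₂ ^ 4 * (1 - ((1 + p) * q + c₁ / k₂)) ^ 2 / (4 * c₂ ^ 2) -
              (k₂ ^ 2 / c₂) * (k₂ * c₃ + c₄)) := by
  obtain ⟨K, hK⟩ := eventually_atTop.1 (eventually_four_mul_le_one_sub_sq hpq c₁ c₂ c₃ c₄)
  refine ⟨max K 1, by positivity, fun k₂ hk₂ z hz₀ hzN₀ hrec ↦ ?_⟩
  have hk₂0 : 0 < k₂ := lt_of_lt_of_le one_pos (le_of_max_le_right hk₂)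
  have hα : 0 ≤ (1 + p) * q + c₁ / k₂ := by
    have := hp.1; have := hq.1; positivity
  rw [← upperFixedPoint_div_sq] at hzN₀ ⊢
  have hmaps := mapsTo_Icc_zero_of_fixedPt hα (by positivity) (by positivity)
    (upperFixedPoint_isFixedPt (by positivity) (hK k₂ (le_of_max_le_left hk₂)))
  refine fun i hi ↦ (hmaps.mem_of_eq_apply_pred ⟨hz₀.le, hzN₀⟩ (fun j hj ↦ ?_) i hi).2
  rw [hrec j hj, add_assoc]
end
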